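/- Let a, b be positive integers with b > a, let v ≥ 1, and let a_1 > a_2 > ... > a_v be integers of the same parity as a+b-1 with b - a - 1 ≤ a_v and a_1 < a + b - 1. Define the partition O' whose parts are: two copies of (a_v - (b - a - 1))/2 (this part being omitted if a_v = b - a - 1); two copies of (a_j + a_{j+1})/2 for each j ∈ [1, v-1] with j ≡ v (mod 2); together with two copies of (a + b - 1 + a_1)/2 if v is even, or one copy of a + b - 1 if v is odd. Define the partition O whose parts are two copies of a together with a_1, ..., a_v. Then O' and O have the same total sum and O' dominates O. -/

import Mathlib

/-!
For a multiset `s` let `excess s x = ∑_{p ∈ s} max (p - x) 0`. When the parts of `s` are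
nonnegative, the sum of its `t` largest parts is `min_{x ≥ 0} (t * x + excess s x)`, so `O'`
dominates `O` as soon as `excess O ≤ excess O'` on `[0, ∞)`.

Put `c = a + b - 1` and `d = b - a - 1`, so that `O` consists of the `a_j` and two copies of
`(c - d) / 2`. The partition `O'` comes from the chain `c, a_1, …, a_v, -d`: cut it into
consecutive pairs from the bottom (leaving `c` alone when `v` is odd) and replace each pair by two
copies of its mean. Passing from `v` to `v + 2` adds `a_{v+1}, a_{v+2}` to `O` and replaces the two
parts `(a_v - d) / 2` of `O'` by two copies each of `(a_v + a_{v+1}) / 2` and `(a_{v+2} - d) / 2`;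
the elementary inequality `pairing_step_le` shows that this preserves `excess O ≤ excess O'`.
-/

open Multiset

section Dominance

variable {K : Type*} [Field K] [LinearOrder K]

def excess (s : Multiset K) (x : K) : K := (s.map fun p => max (p - x) 0).sum

def topSum (s : Multiset K) (t : ℕ) : K := ((s.sort (· ≤ ·)).reverse.take t).sum

@[simp]
lemma excess_add (s s' : Multiset K) (x : K) : excess (s + s') x = excess s x + excess s' x := by
  simp [excess]

@[simp]
lemma excess_replicate (n : ℕ) (p x : K) : excess (replicate n p) x = n * max (p - x) 0 := by
  simp [excess]

@[simp]
lemma excess_singleton (p x : K) : excess {p} x = max (p - x) 0 := by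
  simp [excess]

@[simp]
lemma excess_map_range (n : ℕ) (β : ℕ → K) (x : K) :
    excess ((Finset.range n).val.map β) x = ∑ j ∈ Finset.range n, max (β j - x) 0 := by
  rw [excess, Multiset.map_map]
  rfl

lemma excess_sort_reverse (s : Multiset K) (x : K) :
    excess s x = ((s.sort (· ≤ ·)).reverse.map fun p => max (p - x) 0).sum := by
  rw [List.map_reverse, List.sum_reverse, excess]
  conv_lhs => rw [← s.sort_eq (· ≤ ·)]
  rw [Multiset.map_coe, Multiset.sum_coe]

variable [IsStrictOrderedRing K]

lemma excess_ite_replicate_add {P : Prop} [Decidable P] {n : ℕ} {p x : K} (s : Multiset K)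
    (hp : P → p = 0) (hx : 0 ≤ x) :
    excess ((if P then 0 else replicate n p) + s) x = excess (replicate n p + s) x := by
  split_ifs with h
  · simp [hp h, hx]
  · rfl

lemma List.length_mul_add_sum_map_max_sub (l : List K) (x : K) :
    l.length * x + (l.map fun p => max (p - x) 0).sum = (l.map fun p => max p x).sum := by
  have h (p : K) : max p x = max (p - x) 0 + x := by rw [← max_add_add_right]; simp
  simp [h, List.sum_map_add, add_comm]

lemma List.sum_take_le_add_sum_map_max_sub (l : List K) (t : ℕ) {x : K} (hx : 0 ≤ x) :
    (l.take t).sum ≤ t * x + (l.map fun p => max (p - x) 0).sum := by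
  calc (l.take t).sum ≤ ((l.take t).map fun p => max p x).sum := by
        simpa using List.sum_le_sum (l := l.take t) (fun p _ => le_max_left p x)
    _ = (l.take t).length * x + ((l.take t).map fun p => max (p - x) 0).sum :=
        (length_mul_add_sum_map_max_sub _ x).symm
    _ ≤ t * x + (l.map fun p => max (p - x) 0).sum := by
        gcongr
        · simp
        · exact ((List.take_sublist t l).map _).sum_le_sum fun _ ha => by
            obtain ⟨p, -, rfl⟩ := List.mem_map.mp ha
            exact le_max_right _ _

lemma List.exists_add_sum_map_max_sub_le_sum_take {l : List K} (hl : l.Pairwise (· ≥ ·))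
    (hnn : ∀ p ∈ l, 0 ≤ p) (t : ℕ) :
    ∃ x, 0 ≤ x ∧ t * x + (l.map fun p => max (p - x) 0).sum ≤ (l.take t).sum := by
  -- The witness is the largest part outside the first `t`, or `0` if there is none.
  rcases hdrop : l.drop t with _ | ⟨y, rest⟩
  · refine ⟨0, le_rfl, ?_⟩
    rw [List.take_of_length_le (List.drop_eq_nil_iff.mp hdrop)]
    simpa using List.sum_le_sum (l := l) fun p hp => (max_eq_left (hnn p hp)).le
  · have hsplit := List.take_append_drop t l
    rw [hdrop] at hsplit
    have hlt : t < l.length := by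
      by_contra! h
      simp [List.drop_of_length_le h] at hdrop
    have hlen : (l.take t).length = t := List.length_take_of_le hlt.le
    rw [← hsplit, List.pairwise_append, List.pairwise_cons] at hl
    obtain ⟨-, ⟨hy, -⟩, hge⟩ := hl
    have hhead : t * y + ((l.take t).map fun p => max (p - y) 0).sum = (l.take t).sum := by
      have := List.length_mul_add_sum_map_max_sub (l.take t) y
      rw [hlen] at this
      rw [this, List.map_congr_left fun p hp => max_eq_left (hge p hp y List.mem_cons_self),
        List.map_id']
    have htail : ((y :: rest).map fun p => max (p - y) 0).sum = 0 := by
      refine List.sum_eq_zero fun q hq => ?_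
      obtain ⟨p, hp, rfl⟩ := List.mem_map.mp hq
      rcases List.mem_cons.mp hp with rfl | hp
      · simp
      · exact max_eq_right (sub_nonpos.mpr (hy p hp))
    refine ⟨y, hnn y (by rw [← hsplit]; simp), ?_⟩
    conv_lhs => rw [← hsplit, List.map_append, List.sum_append, htail, add_zero, hhead]

lemma topSum_le_add_excess (s : Multiset K) (t : ℕ) {x : K} (hx : 0 ≤ x) :
    topSum s t ≤ t * x + excess s x := by
  rw [topSum, excess_sort_reverse]
  exact List.sum_take_le_add_sum_map_max_sub _ t hx

lemma exists_add_excess_le_topSum {s : Multiset K} (hs : ∀ p ∈ s, 0 ≤ p) (t : ℕ) :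
    ∃ x, 0 ≤ x ∧ t * x + excess s x ≤ topSum s t := by
  simp only [excess_sort_reverse]
  exact List.exists_add_sum_map_max_sub_le_sum_take
    (List.pairwise_reverse.mpr (s.pairwise_sort _)) (fun p hp => hs p (by simpa using hp)) t

theorem topSum_le_topSum_of_excess_le {s s' : Multiset K} (hs' : ∀ p ∈ s', 0 ≤ p)
    (h : ∀ x, 0 ≤ x → excess s x ≤ excess s' x) (t : ℕ) : topSum s t ≤ topSum s' t := by
  obtain ⟨x, hx, hx'⟩ := exists_add_excess_le_topSum hs' t
  calc topSum s t ≤ t * x + excess s x := topSum_le_add_excess s t hx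
    _ ≤ t * x + excess s' x := by gcongr; exact h x hx
    _ ≤ topSum s' t := hx'

end Dominance

section Pairing

variable {K : Type*} [Field K]

lemma sum_ite_replicate {P : Prop} [Decidable P] {n : ℕ} {p : K} (hp : P → p = 0) :
    (if P then 0 else replicate n p).sum = n * p := by
  split_ifs with h <;> simp [hp, h]

-- The means of the pairs `(β (v - 2), β (v - 3)), (β (v - 4), β (v - 5)), …` of the chain
-- `c, β 0, …, β (v - 2)`, ending with `(β 0, c)` if `v` is even and with `c` alone if `v` is
-- odd.
def pairedParts (c : K) (β : ℕ → K) (v : ℕ) : Multiset K :=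
  ((Finset.range (v - 1)).filter (fun j => (j + 1) % 2 = v % 2)).val.bind
      (fun j => replicate 2 ((β j + β (j + 1)) / 2))
    + if v % 2 = 0 then replicate 2 ((c + β 0) / 2) else {c}

lemma pairedParts_one (c : K) (β : ℕ → K) : pairedParts c β 1 = {c} := by
  simp [pairedParts]

lemma pairedParts_two (c : K) (β : ℕ → K) :
    pairedParts c β 2 = replicate 2 ((c + β 0) / 2) := by
  simp [pairedParts]

lemma pairedParts_add_three (c : K) (β : ℕ → K) (n : ℕ) :
    pairedParts c β (n + 3) =
      pairedParts c β (n + 1) + replicate 2 ((β n + β (n + 1)) / 2) := by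
  have hfilter : (Finset.range (n + 2)).filter (fun j => (j + 1) % 2 = (n + 3) % 2) =
      insert n ((Finset.range n).filter (fun j => (j + 1) % 2 = (n + 1) % 2)) := by
    ext j
    simp only [Finset.mem_filter, Finset.mem_range, Finset.mem_insert]
    omega
  have hparity : (n + 3) % 2 = (n + 1) % 2 := by omega
  rw [pairedParts, pairedParts, show n + 3 - 1 = n + 2 from rfl, hfilter,
    Finset.insert_val_of_notMem (by simp), Multiset.cons_bind, hparity]
  ac_rfl

variable [LinearOrder K] [IsStrictOrderedRing K]

lemma sum_pairedParts (c : K) (β : ℕ → K) (n : ℕ) :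
    (pairedParts c β (n + 1)).sum = c + ∑ j ∈ Finset.range n, β j := by
  induction n using Nat.twoStepInduction with
  | zero => simp [pairedParts_one]
  | one => simp [pairedParts_two]
  | more n ih _ =>
    rw [pairedParts_add_three, Multiset.sum_add, ih, Finset.sum_range_succ, Finset.sum_range_succ,
      Multiset.sum_replicate, nsmul_eq_mul]
    ring

lemma nonneg_of_mem_pairedParts {c : K} {β : ℕ → K} (hc : 0 ≤ c) {n : ℕ}
    (hβ : ∀ j < n, 0 ≤ β j) : ∀ p ∈ pairedParts c β (n + 1), 0 ≤ p := by
  induction n using Nat.twoStepInduction with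
  | zero => simpa [pairedParts_one] using hc
  | one =>
    simp only [Nat.reduceAdd, pairedParts_two, mem_replicate]
    rintro p ⟨-, rfl⟩
    have := hβ 0 one_pos
    positivity
  | more n ih _ =>
    simp only [pairedParts_add_three, Multiset.mem_add, mem_replicate]
    rintro p (hp | ⟨-, rfl⟩)
    · exact ih (fun j hj => hβ j (by omega)) p hp
    · have := hβ n (by omega)
      have := hβ (n + 1) (by omega)
      positivity

lemma pairing_base_le {c d b x : K} (hd : 0 ≤ d) (hdb : d ≤ b) (hbc : b ≤ c) :
    2 * max ((c - d) / 2 - x) 0 + max (b - x) 0 ≤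
      2 * max ((b - d) / 2 - x) 0 + max (c - x) 0 := by
  rcases max_cases ((c - d) / 2 - x) 0 with ⟨e1, f1⟩ | ⟨e1, f1⟩ <;>
  rcases max_cases (b - x) 0 with ⟨e2, f2⟩ | ⟨e2, f2⟩ <;>
  rcases max_cases ((b - d) / 2 - x) 0 with ⟨e3, f3⟩ | ⟨e3, f3⟩ <;>
  rcases max_cases (c - x) 0 with ⟨e4, f4⟩ | ⟨e4, f4⟩ <;>
  rw [e1, e2, e3, e4] <;> linarith

lemma pairing_step_le {p q r d x : K} (hd : 0 ≤ d) (hdr : d ≤ r) (hrq : r ≤ q)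
    (hqp : q ≤ p) :
    max (q - x) 0 + max (r - x) 0 + 2 * max ((p - d) / 2 - x) 0 ≤
      2 * max ((p + q) / 2 - x) 0 + 2 * max ((r - d) / 2 - x) 0 := by
  rcases max_cases (q - x) 0 with ⟨e1, f1⟩ | ⟨e1, f1⟩ <;>
  rcases max_cases (r - x) 0 with ⟨e2, f2⟩ | ⟨e2, f2⟩ <;>
  rcases max_cases ((p - d) / 2 - x) 0 with ⟨e3, f3⟩ | ⟨e3, f3⟩ <;>
  rcases max_cases ((p + q) / 2 - x) 0 with ⟨e4, f4⟩ | ⟨e4, f4⟩ <;>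
  rcases max_cases ((r - d) / 2 - x) 0 with ⟨e5, f5⟩ | ⟨e5, f5⟩ <;>
  rw [e1, e2, e3, e4, e5] <;> linarith

theorem excess_le_excess_pairedParts {c d : K} {β : ℕ → K} (hd : 0 ≤ d) (hc : β 0 ≤ c)
    (x : K) {n : ℕ} (hdn : d ≤ β n) (hβ : AntitoneOn β (Set.Iic n)) :
    excess (replicate 2 ((c - d) / 2) + (Finset.range (n + 1)).val.map β) x ≤
      excess (replicate 2 ((β n - d) / 2) + pairedParts c β (n + 1)) x := by
  induction n using Nat.twoStepInduction with
  | zero =>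
    simpa only [zero_add, pairedParts_one, excess_add, excess_replicate, excess_singleton,
      excess_map_range, Finset.sum_range_one, Nat.cast_ofNat] using
      pairing_base_le (x := x) hd hdn hc
  | one =>
    simp only [Nat.reduceAdd, pairedParts_two, excess_add, excess_replicate, excess_map_range,
      Finset.sum_range_succ, Finset.sum_range_zero]
    have h01 : β 1 ≤ β 0 := hβ (Set.mem_Iic.mpr zero_le_one) Set.self_mem_Iic zero_le_one
    linarith [pairing_step_le (x := x) hd hdn h01 hc]
  | more n ih _ =>
    have hn1 : β (n + 2) ≤ β (n + 1) := hβ (by simp) Set.self_mem_Iic (by simp)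
    have hn : β (n + 1) ≤ β n := hβ (by simp) (by simp) (by simp)
    have := ih (hdn.trans (hn1.trans hn)) (hβ.mono (Set.Iic_subset_Iic.mpr (by omega)))
    simp only [pairedParts_add_three, excess_add, excess_replicate, excess_map_range,
      Finset.sum_range_succ] at this ⊢
    linarith [pairing_step_le (x := x) hd hdn hn1 hn]

theorem pairedParts_majorizes {c d : K} {β : ℕ → K} {n : ℕ} (P : Prop) [Decidable P]
    (hP : P → β n = d) (hd : 0 ≤ d) (hc : β 0 ≤ c) (hdn : d ≤ β n)
    (hβ : AntitoneOn β (Set.Iic n)) :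
    let O' := (if P then 0 else replicate 2 ((β n - d) / 2)) + pairedParts c β (n + 1)
    let O := replicate 2 ((c - d) / 2) + (Finset.range (n + 1)).val.map β
    O'.sum = O.sum ∧ ∀ t, topSum O t ≤ topSum O' t := by
  intro O' O
  have htail : P → (β n - d) / 2 = 0 := fun h => by simp [hP h]
  have hge : ∀ j ≤ n, d ≤ β j := fun j hj => hdn.trans (hβ hj Set.self_mem_Iic hj)
  refine ⟨?_, topSum_le_topSum_of_excess_le ?_ fun x hx => ?_⟩
  · rw [Multiset.sum_add, Multiset.sum_add, sum_ite_replicate htail, sum_pairedParts,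
      Multiset.sum_replicate, nsmul_eq_mul, Finset.sum_map_val, Finset.sum_range_succ]
    push_cast
    ring
  · intro p hp
    rcases Multiset.mem_add.mp hp with hp | hp
    · split_ifs at hp
      · simp at hp
      · rw [eq_of_mem_replicate hp]
        linarith [hge n le_rfl]
    · exact nonneg_of_mem_pairedParts (hd.trans (hge 0 n.zero_le) |>.trans hc)
        (fun j hj => hd.trans (hge j hj.le)) p hp
  · rw [excess_ite_replicate_add _ htail hx]
    exact excess_le_excess_pairedParts hd hc x hdn hβ

end Pairing

theorem stmt_10_general (a b v : ℕ) (hab : a < b) (hv : 1 ≤ v) (α : ℕ → ℤ)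
    (hlow : (b : ℤ) - a - 1 ≤ α (v - 1)) (hhigh : α 0 < (a : ℤ) + b - 1)
    (hdec : ∀ i j, i < j → j < v → α j < α i) :
    let O' : Multiset ℚ :=
      (if α (v - 1) = (b : ℤ) - a - 1 then 0
       else Multiset.replicate 2 (((α (v - 1) : ℚ) - ((b : ℚ) - a - 1)) / 2))
      + ((Finset.range (v - 1)).filter (fun j => (j + 1) % 2 = v % 2)).val.bind
          (fun j => Multiset.replicate 2 (((α j : ℚ) + (α (j + 1) : ℚ)) / 2))
      + (if v % 2 = 0 then Multiset.replicate 2 (((a : ℚ) + b - 1 + (α 0 : ℚ)) / 2)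
         else {(a : ℚ) + b - 1})
    let O : Multiset ℚ :=
      Multiset.replicate 2 (a : ℚ) + (Finset.range v).val.map (fun j => (α j : ℚ))
    O'.sum = O.sum ∧
      ∀ t : ℕ, ((O.sort (· ≤ ·)).reverse.take t).sum ≤ ((O'.sort (· ≤ ·)).reverse.take t).sum := by
  intro O' O
  obtain ⟨n, rfl⟩ : ∃ n, v = n + 1 := ⟨v - 1, by omega⟩
  have hd : (0 : ℚ) ≤ b - a - 1 := by
    rw [sub_sub, sub_nonneg]
    exact_mod_cast hab
  have hβ : StrictAntiOn (fun j => (α j : ℚ)) (Set.Iic n) := fun i _ j hj hij =>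
    Int.cast_lt.mpr (hdec i j hij (Nat.lt_succ_of_le hj))
  have key := pairedParts_majorizes (c := (a : ℚ) + b - 1) (α n = (b : ℤ) - a - 1)
    (fun h => by simp [h]) hd (by exact_mod_cast hhigh.le) (by exact_mod_cast hlow) hβ.antitoneOn
  rw [show ((a : ℚ) + b - 1 - (b - a - 1)) / 2 = a by ring] at key
  rw [show O' = _ from add_assoc _ _ _]
  exact key

/-- Orbit-closure lemma for negative blocks (third lemma of "Une remarque sur les
orbites unipotentes", case `a < b`): the partition `O'` with parts two copies of
`(a_v - (b-a-1))/2` (omitted when `a_v = b-a-1`), two copies of `(a_j + a_{j+1})/2`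
for `j ≡ v (mod 2)`, `1 ≤ j < v`, plus two copies of `(a+b-1+a_1)/2` (v even) or
one copy of `a+b-1` (v odd), has the same total as, and dominates, the partition
`O` with parts two copies of `a` together with the `a_j`. Here `a_1 > ... > a_v`
are integers of the parity of `a+b-1` with `b-a-1 ≤ a_v` and `a_1 < a+b-1`,
encoded as `α (j-1) = a_j`. -/
theorem stmt_10 (a b v : ℕ) (ha : 0 < a) (hab : a < b) (hv : 1 ≤ v) (α : ℕ → ℤ)
    (hlow : (b : ℤ) - a - 1 ≤ α (v - 1)) (hhigh : α 0 < (a : ℤ) + b - 1)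
    (hpar : ∀ j < v, α j % 2 = ((a : ℤ) + b - 1) % 2)
    (hdec : ∀ i j, i < j → j < v → α j < α i) :
    let O' : Multiset ℚ :=
      (if α (v - 1) = (b : ℤ) - a - 1 then 0
       else Multiset.replicate 2 (((α (v - 1) : ℚ) - ((b : ℚ) - a - 1)) / 2))
      + ((Finset.range (v - 1)).filter (fun j => (j + 1) % 2 = v % 2)).val.bind
          (fun j => Multiset.replicate 2 (((α j : ℚ) + (α (j + 1) : ℚ)) / 2))
      + (if v % 2 = 0 then Multiset.replicate 2 (((a : ℚ) + b - 1 + (α 0 : ℚ)) / 2)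
         else {(a : ℚ) + b - 1})
    let O : Multiset ℚ :=
      Multiset.replicate 2 (a : ℚ) + (Finset.range v).val.map (fun j => (α j : ℚ))
    O'.sum = O.sum ∧
      ∀ t : ℕ, ((O.sort (· ≤ ·)).reverse.take t).sum ≤ ((O'.sort (· ≤ ·)).reverse.take t).sum :=
  stmt_10_general a b v hab hv α hlow hhigh hdec
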